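/- Let 0 < d < 1, α > 0, and define π_h = V_h ∏_{t=1}^{h-1}(1-V_t) where V_t are independent with V_t ~ Beta(1-d, α+td). Then E[log π_h] = ψ(1-d) - ψ(α) + (1/d)(ψ(α/d) - ψ(α/d + h)). -/

import Mathlib

/-!
Almost surely `log π_h = log V_h + ∑_{t<h} log (1 - V_t)`, so by linearity only the Beta
log-moment `E[log X] = ψ(a) - ψ(a + b)` for `X ~ Beta(a, b)` is needed, applied to `V_h` and to
`1 - V_t ~ Beta(α + t d, 1 - d)`. That moment is `∂ₐ B(a, b) / B(a, b)`: differentiate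
`B(a, b) = ∫₀¹ x^(a-1) (1-x)^(b-1) dx` under the integral sign and compare with
`∂ₐ log (Γ(a) Γ(b) / Γ(a + b))`. The resulting digamma terms telescope by `ψ(x + 1) = ψ(x) + 1/x`.
-/

open MeasureTheory ProbabilityTheory Real Filter Finset
open scoped ENNReal NNReal

noncomputable def betaPDF (a b x : ℝ) : ℝ≥0∞ :=
  ENNReal.ofReal (if 0 < x ∧ x < 1 then
    (Real.Gamma (a + b) / (Real.Gamma a * Real.Gamma b)) * x ^ (a - 1) * (1 - x) ^ (b - 1)
    else 0)

/-- The Beta(a,b) distribution on ℝ. -/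
noncomputable def betaMeasure (a b : ℝ) : Measure ℝ :=
  MeasureTheory.volume.withDensity (_root_.betaPDF a b)

/-- The digamma function ψ = (log Γ)'. -/
noncomputable def digamma (x : ℝ) : ℝ :=
  deriv (fun y => Real.log (Real.Gamma y)) x

/-- The trigamma function ψ₁ = (log Γ)''. -/
noncomputable def trigamma (x : ℝ) : ℝ :=
  deriv (deriv (fun y => Real.log (Real.Gamma y))) x

/-- Stick-breaking weight π_h = V_h ∏_{t=1}^{h-1} (1 - V_t), where `W t` plays the
role of `V_{t+1}` (so `V_t = W (t-1)` for `t ≥ 1`). -/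
noncomputable def stickWeight {Ω : Type*} (W : ℕ → Ω → ℝ) (h : ℕ) (ω : Ω) : ℝ :=
  W (h - 1) ω * ∏ t ∈ Finset.range (h - 1), (1 - W t ω)

open Set Topology

theorem hasDerivAt_log_Gamma {x : ℝ} (hx : 0 < x) :
    HasDerivAt (fun y => log (Gamma y)) (digamma x) x :=
  ((differentiableAt_Gamma fun m hm => by
      linarith [(Nat.cast_nonneg m : (0 : ℝ) ≤ m)]).log (Gamma_pos_of_pos hx).ne').hasDerivAt

theorem digamma_add_one {x : ℝ} (hx : 0 < x) : digamma (x + 1) = digamma x + x⁻¹ := by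
  have hshift : (fun y => log (Gamma (y + 1))) =ᶠ[𝓝 x] fun y => log y + log (Gamma y) := by
    filter_upwards [Ioi_mem_nhds hx] with y hy
    rw [Gamma_add_one hy.ne', log_mul hy.ne' (Gamma_pos_of_pos hy).ne']
  calc digamma (x + 1) = deriv (fun y => log (Gamma (y + 1))) x :=
        (deriv_comp_add_const _ _ _).symm
    _ = deriv (fun y => log y + log (Gamma y)) x := hshift.deriv_eq
    _ = x⁻¹ + digamma x := ((hasDerivAt_log hx.ne').add (hasDerivAt_log_Gamma hx)).deriv
    _ = digamma x + x⁻¹ := add_comm _ _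

theorem digamma_add_nat {x : ℝ} (hx : 0 < x) :
    ∀ n : ℕ, digamma (x + n) = digamma x + ∑ k ∈ range n, (x + k)⁻¹
  | 0 => by simp
  | n + 1 => by
    rw [Nat.cast_succ, ← add_assoc, digamma_add_one (by positivity), digamma_add_nat hx n,
      sum_range_succ, add_assoc]

theorem one_div_mul_digamma_sub_digamma_add_nat {α d : ℝ} (hα : 0 < α) (hd : 0 < d) (n : ℕ) :
    1 / d * (digamma (α / d) - digamma (α / d + n)) = -∑ k ∈ range n, (α + k * d)⁻¹ := by
  rw [digamma_add_nat (by positivity), sub_add_cancel_left, mul_neg, mul_sum]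
  congr 1
  refine sum_congr rfl fun k _ => ?_
  field_simp

namespace ProbabilityTheory

theorem beta_comm (a b : ℝ) : beta a b = beta b a := by
  rw [beta, beta, mul_comm, add_comm]

variable {a b : ℝ}

theorem betaPDFReal_nonneg (ha : 0 < a) (hb : 0 < b) (x : ℝ) : 0 ≤ betaPDFReal a b x := by
  by_cases hx : 0 < x ∧ x < 1
  · exact (betaPDFReal_pos hx.1 hx.2 ha hb).le
  · simp [betaPDFReal, hx]

theorem betaPDFReal_eq_indicator (a b : ℝ) :
    betaPDFReal a b =
      (Set.Ioo 0 1).indicator fun x => 1 / beta a b * x ^ (a - 1) * (1 - x) ^ (b - 1) := by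
  ext x
  simp only [betaPDFReal, indicator, Set.mem_Ioo]

theorem integrable_betaPDFReal (ha : 0 < a) (hb : 0 < b) : Integrable (betaPDFReal a b) :=
  ⟨(measurable_betaPDFReal a b).aestronglyMeasurable,
    (hasFiniteIntegral_iff_ofReal (ae_of_all _ (betaPDFReal_nonneg ha hb))).2 <|
      (lintegral_betaPDF_eq_one ha hb).trans_lt ENNReal.one_lt_top⟩

theorem integral_betaPDFReal (ha : 0 < a) (hb : 0 < b) : ∫ x, betaPDFReal a b x = 1 := by
  rw [integral_eq_lintegral_of_nonneg_ae (ae_of_all _ (betaPDFReal_nonneg ha hb))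
    (measurable_betaPDFReal a b).aestronglyMeasurable]
  change (∫⁻ x, betaPDF a b x).toReal = 1
  simp [ha, hb]

theorem integrableOn_rpow_mul_one_sub_rpow (ha : 0 < a) (hb : 0 < b) :
    IntegrableOn (fun x : ℝ => x ^ (a - 1) * (1 - x) ^ (b - 1)) (Set.Ioo 0 1) := by
  have hpdf : IntegrableOn (fun x => 1 / beta a b * x ^ (a - 1) * (1 - x) ^ (b - 1))
      (Set.Ioo 0 1) := by
    rw [← integrable_indicator_iff measurableSet_Ioo, ← betaPDFReal_eq_indicator]
    exact integrable_betaPDFReal ha hb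
  refine IntegrableOn.congr_fun (hpdf.const_mul (beta a b)) (fun x _ => ?_) measurableSet_Ioo
  field_simp [(beta_pos ha hb).ne']

theorem setIntegral_rpow_mul_one_sub_rpow (ha : 0 < a) (hb : 0 < b) :
    ∫ x in Set.Ioo 0 1, x ^ (a - 1) * (1 - x) ^ (b - 1) = beta a b := by
  have h := integral_betaPDFReal ha hb
  simp_rw [betaPDFReal_eq_indicator, integral_indicator measurableSet_Ioo, mul_assoc,
    integral_const_mul] at h
  field_simp at h
  rwa [div_eq_one_iff_eq (beta_pos ha hb).ne'] at h

theorem hasDerivAt_beta (ha : 0 < a) (hb : 0 < b) :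
    HasDerivAt (fun s => beta s b) (beta a b * (digamma a - digamma (a + b))) a := by
  have hlog : HasDerivAt (fun s => log (Gamma s) + log (Gamma b) - log (Gamma (s + b)))
      (digamma a - digamma (a + b)) a :=
    ((hasDerivAt_log_Gamma ha).add_const _).sub
      (HasDerivAt.comp_add_const a b (hasDerivAt_log_Gamma (by linarith)))
  have hexp : ∀ s, 0 < s →
      exp (log (Gamma s) + log (Gamma b) - log (Gamma (s + b))) = beta s b := fun s hs => by
    rw [exp_sub, exp_add, exp_log (Gamma_pos_of_pos hs), exp_log (Gamma_pos_of_pos hb),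
      exp_log (Gamma_pos_of_pos (by linarith)), beta]
  rw [← hexp a ha]
  refine hlog.exp.congr_of_eventuallyEq ?_
  filter_upwards [Ioi_mem_nhds ha] with s hs
  exact (hexp s hs).symm

theorem abs_log_mul_rpow_sub_one_le {a s x : ℝ} (ha : 0 < a) (hs : a / 2 ≤ s)
    (hx : x ∈ Set.Ioo 0 1) : |log x| * x ^ (s - 1) ≤ 4 / a * x ^ (a / 4 - 1) := by
  obtain ⟨hx0, hx1⟩ := hx
  calc |log x| * x ^ (s - 1) ≤ |log x| * x ^ (a / 2 - 1) := by
        gcongr |log x| * ?_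
        exact rpow_le_rpow_of_exponent_ge hx0 hx1.le (by linarith)
    _ = |log x * x ^ (a / 4)| * x ^ (a / 4 - 1) := by
        rw [abs_mul, abs_of_pos (rpow_pos_of_pos hx0 _),
          show a / 2 - 1 = a / 4 + (a / 4 - 1) by ring, rpow_add hx0, mul_assoc]
    _ ≤ 4 / a * x ^ (a / 4 - 1) := by
        gcongr
        simpa [one_div_div] using (abs_log_mul_self_rpow_lt x (a / 4) hx0 hx1.le (by positivity)).le

theorem hasDerivAt_setIntegral_rpow_mul_one_sub_rpow (ha : 0 < a) (hb : 0 < b) :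
    IntegrableOn (fun x => log x * (x ^ (a - 1) * (1 - x) ^ (b - 1))) (Set.Ioo 0 1) ∧
    HasDerivAt (fun s => ∫ x in Set.Ioo 0 1, x ^ (s - 1) * (1 - x) ^ (b - 1))
      (∫ x in Set.Ioo 0 1, log x * (x ^ (a - 1) * (1 - x) ^ (b - 1))) a := by
  refine hasDerivAt_integral_of_dominated_loc_of_deriv_le
    (F := fun s x => x ^ (s - 1) * (1 - x) ^ (b - 1))
    (F' := fun s x => log x * (x ^ (s - 1) * (1 - x) ^ (b - 1)))
    (bound := fun x => 4 / a * (x ^ (a / 4 - 1) * (1 - x) ^ (b - 1)))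
    (Metric.ball_mem_nhds a (half_pos ha)) (.of_forall fun s => by fun_prop)
    (integrableOn_rpow_mul_one_sub_rpow ha hb) (by fun_prop) ?_
    ((integrableOn_rpow_mul_one_sub_rpow (by positivity) hb).const_mul _) ?_
  · refine (ae_restrict_iff' measurableSet_Ioo).2 (.of_forall fun x hx s hs => ?_)
    rw [Metric.mem_ball, Real.dist_eq, abs_lt] at hs
    have h1x : 0 ≤ (1 - x) ^ (b - 1) := rpow_nonneg (sub_pos.2 hx.2).le _
    rw [norm_mul, norm_mul, Real.norm_eq_abs, Real.norm_of_nonneg (rpow_nonneg hx.1.le _),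
      Real.norm_of_nonneg h1x, ← mul_assoc, ← mul_assoc]
    exact mul_le_mul_of_nonneg_right
      (abs_log_mul_rpow_sub_one_le ha (by linarith [hs.1]) hx) h1x
  · refine (ae_restrict_iff' measurableSet_Ioo).2 (.of_forall fun x hx s _ => ?_)
    exact ((((hasDerivAt_id' s).sub_const 1).const_rpow hx.1).mul_const _).congr_deriv (by ring)

theorem setIntegral_log_mul_rpow_mul_one_sub_rpow (ha : 0 < a) (hb : 0 < b) :
    ∫ x in Set.Ioo 0 1, log x * (x ^ (a - 1) * (1 - x) ^ (b - 1)) =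
      beta a b * (digamma a - digamma (a + b)) := by
  refine (hasDerivAt_setIntegral_rpow_mul_one_sub_rpow ha hb).2.unique
    ((hasDerivAt_beta ha hb).congr_of_eventuallyEq ?_)
  filter_upwards [Ioi_mem_nhds ha] with s hs
  exact setIntegral_rpow_mul_one_sub_rpow hs hb

theorem measurable_betaPDF (a b : ℝ) : Measurable (betaPDF a b) :=
  (measurable_betaPDFReal a b).ennreal_ofReal

theorem integral_betaMeasure (ha : 0 < a) (hb : 0 < b) (g : ℝ → ℝ) :
    ∫ x, g x ∂betaMeasure a b = ∫ x, betaPDFReal a b x * g x := by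
  rw [betaMeasure, integral_withDensity_eq_integral_toReal_smul
    (measurable_betaPDF a b) (ae_of_all _ fun _ => ENNReal.ofReal_lt_top)]
  simp only [betaPDF, ENNReal.toReal_ofReal (betaPDFReal_nonneg ha hb _), smul_eq_mul]

theorem integrable_betaMeasure_iff (ha : 0 < a) (hb : 0 < b) {g : ℝ → ℝ} :
    Integrable g (betaMeasure a b) ↔ Integrable fun x => betaPDFReal a b x * g x := by
  rw [betaMeasure, integrable_withDensity_iff_integrable_smul'
    (measurable_betaPDF a b) (ae_of_all _ fun _ => ENNReal.ofReal_lt_top)]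
  simp only [betaPDF, ENNReal.toReal_ofReal (betaPDFReal_nonneg ha hb _), smul_eq_mul]

theorem integrable_log_betaMeasure (ha : 0 < a) (hb : 0 < b) :
    Integrable log (betaMeasure a b) := by
  rw [integrable_betaMeasure_iff ha hb, betaPDFReal_eq_indicator]
  simp_rw [← indicator_mul_left]
  rw [integrable_indicator_iff measurableSet_Ioo]
  refine IntegrableOn.congr_fun
    ((hasDerivAt_setIntegral_rpow_mul_one_sub_rpow ha hb).1.const_mul (1 / beta a b))
    (fun x _ => by ring) measurableSet_Ioo

theorem integral_log_betaMeasure (ha : 0 < a) (hb : 0 < b) :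
    ∫ x, log x ∂betaMeasure a b = digamma a - digamma (a + b) := by
  rw [integral_betaMeasure ha hb, betaPDFReal_eq_indicator]
  simp_rw [← indicator_mul_left]
  rw [integral_indicator measurableSet_Ioo]
  calc ∫ x in Set.Ioo 0 1, 1 / beta a b * x ^ (a - 1) * (1 - x) ^ (b - 1) * log x
      = 1 / beta a b * ∫ x in Set.Ioo 0 1, log x * (x ^ (a - 1) * (1 - x) ^ (b - 1)) := by
        rw [← integral_const_mul]
        congr with x
        ring
    _ = digamma a - digamma (a + b) := by
        rw [setIntegral_log_mul_rpow_mul_one_sub_rpow ha hb]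
        field_simp [(beta_pos ha hb).ne']

theorem betaPDF_one_sub (a b x : ℝ) : betaPDF a b (1 - x) = betaPDF b a x := by
  have hiff : (0 < 1 - x ∧ 1 - x < 1) ↔ (0 < x ∧ x < 1) := by
    constructor <;> rintro ⟨h1, h2⟩ <;> constructor <;> linarith
  simp only [betaPDF_eq, hiff, sub_sub_cancel, beta_comm a b, mul_right_comm]

theorem map_one_sub_betaMeasure (a b : ℝ) :
    (betaMeasure a b).map (fun x => 1 - x) = betaMeasure b a := by
  ext s hs
  rw [Measure.map_apply (by fun_prop) hs, betaMeasure, betaMeasure, withDensity_apply _ hs,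
    withDensity_apply _ (hs.preimage (by fun_prop))]
  simp_rw [← betaPDF_one_sub b a]
  exact (Measure.measurePreserving_sub_left volume 1).setLIntegral_comp_preimage hs
    (measurable_betaPDF b a)

theorem ae_mem_Ioo_betaMeasure (a b : ℝ) : ∀ᵐ x ∂betaMeasure a b, x ∈ Set.Ioo 0 1 := by
  rw [betaMeasure, ae_withDensity_iff (measurable_betaPDF a b)]
  exact .of_forall fun x hx => ⟨not_le.1 fun h => hx (betaPDF_eq_zero_of_nonpos h),
    not_le.1 fun h => hx (betaPDF_eq_zero_of_one_le h)⟩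

section RandomVariable

variable {Ω : Type*} [MeasurableSpace Ω] {μ : Measure Ω} {X : Ω → ℝ}

theorem aemeasurable_of_map_eq_betaMeasure (ha : 0 < a) (hb : 0 < b)
    (hX : μ.map X = betaMeasure a b) : AEMeasurable X μ := by
  have := isProbabilityMeasureBeta ha hb
  exact .of_map_ne_zero (hX ▸ IsProbabilityMeasure.ne_zero _)

theorem ae_mem_Ioo_of_map_eq_betaMeasure (ha : 0 < a) (hb : 0 < b)
    (hX : μ.map X = betaMeasure a b) : ∀ᵐ ω ∂μ, X ω ∈ Set.Ioo 0 1 :=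
  ae_of_ae_map (aemeasurable_of_map_eq_betaMeasure ha hb hX) (hX ▸ ae_mem_Ioo_betaMeasure a b)

theorem map_one_sub_of_map_eq_betaMeasure (ha : 0 < a) (hb : 0 < b)
    (hX : μ.map X = betaMeasure a b) : μ.map (fun ω => 1 - X ω) = betaMeasure b a := by
  rw [← map_one_sub_betaMeasure, ← hX, AEMeasurable.map_map_of_aemeasurable (by fun_prop)
    (aemeasurable_of_map_eq_betaMeasure ha hb hX)]
  rfl

theorem integrable_log_of_map_eq_betaMeasure (ha : 0 < a) (hb : 0 < b)
    (hX : μ.map X = betaMeasure a b) : Integrable (fun ω => log (X ω)) μ :=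
  (integrable_map_measure measurable_log.aestronglyMeasurable
    (aemeasurable_of_map_eq_betaMeasure ha hb hX)).1 (hX ▸ integrable_log_betaMeasure ha hb)

theorem integral_log_of_map_eq_betaMeasure (ha : 0 < a) (hb : 0 < b)
    (hX : μ.map X = betaMeasure a b) : ∫ ω, log (X ω) ∂μ = digamma a - digamma (a + b) := by
  rw [← integral_log_betaMeasure ha hb, ← hX,
    integral_map (aemeasurable_of_map_eq_betaMeasure ha hb hX) measurable_log.aestronglyMeasurable]

end RandomVariable

end ProbabilityTheory

theorem betaMeasure_eq_probabilityTheory_betaMeasure (a b : ℝ) :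
    _root_.betaMeasure a b = ProbabilityTheory.betaMeasure a b := by
  simp only [_root_.betaMeasure, ProbabilityTheory.betaMeasure]
  congr 1 with x
  simp only [_root_.betaPDF, ProbabilityTheory.betaPDF, betaPDFReal, beta, one_div_div]

theorem log_stickWeight_succ {Ω : Type*} {W : ℕ → Ω → ℝ} {n : ℕ} {ω : Ω}
    (hn : W n ω ≠ 0) (hlt : ∀ t ∈ range n, 1 - W t ω ≠ 0) :
    log (stickWeight W (n + 1) ω) = log (W n ω) + ∑ t ∈ range n, log (1 - W t ω) := by
  rw [stickWeight, Nat.add_sub_cancel, log_mul hn (prod_ne_zero_iff.2 hlt), log_prod hlt]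

theorem integral_log_stickWeight_succ {Ω : Type*} [MeasurableSpace Ω] {μ : Measure Ω}
    {W : ℕ → Ω → ℝ} (n : ℕ) (hW : ∀ t, ∀ᵐ ω ∂μ, W t ω ∈ Set.Ioo 0 1)
    (hlog : Integrable (fun ω => log (W n ω)) μ)
    (hlog_one_sub : ∀ t, Integrable (fun ω => log (1 - W t ω)) μ) :
    ∫ ω, log (stickWeight W (n + 1) ω) ∂μ =
      ∫ ω, log (W n ω) ∂μ + ∑ t ∈ range n, ∫ ω, log (1 - W t ω) ∂μ := by
  have hsplit : (fun ω => log (stickWeight W (n + 1) ω)) =ᵐ[μ]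
      fun ω => log (W n ω) + ∑ t ∈ range n, log (1 - W t ω) := by
    filter_upwards [ae_all_iff.2 hW] with ω hω
    exact log_stickWeight_succ (hω n).1.ne' fun t _ => (sub_pos.2 (hω t).2).ne'
  have hsum : Integrable (fun ω => ∑ t ∈ range n, log (1 - W t ω)) μ :=
    integrable_finsetSum _ fun t _ => hlog_one_sub t
  rw [integral_congr_ae hsplit, integral_add hlog hsum,
    integral_finsetSum _ fun t _ => hlog_one_sub t]

theorem digamma_stickBreaking_sum {d α : ℝ} (hd : 0 < d) (hα : 0 < α) (n : ℕ) :
    digamma (1 - d) - digamma (1 - d + (α + (n + 1) * d)) +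
        ∑ t ∈ range n, (digamma (α + (t + 1) * d) - digamma (α + (t + 1) * d + (1 - d))) =
      digamma (1 - d) - digamma α + 1 / d * (digamma (α / d) - digamma (α / d + (n + 1))) := by
  have hpos : ∀ t : ℕ, 0 < α + t * d := fun t => by positivity
  have hshift : ∀ t : ℕ,
      digamma (α + (t + 1) * d + (1 - d)) = digamma (α + t * d) + (α + t * d)⁻¹ := by
    intro t
    rw [← digamma_add_one (hpos t)]
    ring_nf
  have htel := sum_range_sub (fun t : ℕ => digamma (α + t * d)) n
  have hharm := one_div_mul_digamma_sub_digamma_add_nat hα hd (n + 1)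
  push_cast at htel hharm
  rw [zero_mul, add_zero] at htel
  rw [sum_range_succ] at hharm
  rw [hharm, show 1 - d + (α + (n + 1) * d) = α + n * d + 1 by ring, digamma_add_one (hpos n)]
  simp only [hshift, ← sub_sub, sum_sub_distrib, htel]
  ring

theorem pdp_expected_log_stick_weight_general {Ω : Type*} [MeasurableSpace Ω] (μ : Measure Ω)
    (d α : ℝ) (hd : 0 < d) (hd1 : d < 1) (hα : 0 < α)
    (W : ℕ → Ω → ℝ)
    (hlaw : ∀ t : ℕ, Measure.map (W t) μ = _root_.betaMeasure (1 - d) (α + (t + 1) * d))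
    (h : ℕ) (hh : 1 ≤ h) :
    ∫ ω, Real.log (stickWeight W h ω) ∂μ =
      digamma (1 - d) - digamma α + (1 / d) * (digamma (α / d) - digamma (α / d + h)) := by
  obtain ⟨n, rfl⟩ : ∃ n, h = n + 1 := ⟨h - 1, by omega⟩
  have ha : 0 < 1 - d := by linarith
  have hb : ∀ t : ℕ, 0 < α + (t + 1) * d := fun t => by positivity
  have hW : ∀ t, μ.map (W t) = ProbabilityTheory.betaMeasure (1 - d) (α + (t + 1) * d) :=
    fun t => (hlaw t).trans (betaMeasure_eq_probabilityTheory_betaMeasure _ _)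
  have hW_one_sub t := map_one_sub_of_map_eq_betaMeasure ha (hb t) (hW t)
  rw [integral_log_stickWeight_succ n (fun t => ae_mem_Ioo_of_map_eq_betaMeasure ha (hb t) (hW t))
      (integrable_log_of_map_eq_betaMeasure ha (hb n) (hW n))
      (fun t => integrable_log_of_map_eq_betaMeasure (hb t) ha (hW_one_sub t)),
    integral_log_of_map_eq_betaMeasure ha (hb n) (hW n)]
  simp only [integral_log_of_map_eq_betaMeasure (hb _) ha (hW_one_sub _)]
  push_cast
  exact digamma_stickBreaking_sum hd hα n

theorem pdp_expected_log_stick_weight {Ω : Type*} [MeasurableSpace Ω] (μ : Measure Ω)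
    [IsProbabilityMeasure μ] (d α : ℝ) (hd : 0 < d) (hd1 : d < 1) (hα : 0 < α)
    (W : ℕ → Ω → ℝ)
    (hind : iIndepFun W μ)
    (hlaw : ∀ t : ℕ, Measure.map (W t) μ = _root_.betaMeasure (1 - d) (α + (t + 1) * d))
    (h : ℕ) (hh : 1 ≤ h) :
    ∫ ω, Real.log (stickWeight W h ω) ∂μ =
      digamma (1 - d) - digamma α + (1 / d) * (digamma (α / d) - digamma (α / d + h)) :=
  pdp_expected_log_stick_weight_general μ d α hd hd1 hα W hlaw h hh
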